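/- Let p, q ∈ ℝ² (identified with ℂ) have polar coordinates p = r_p e^{iψ_p}, q = r_q e^{iψ_q} with r_p, r_q ≥ 0 and ψ_p, ψ_q ∈ [0,2π). Define r(s) := s r_q + (1−s) r_p, ψ(s) := s ψ_q + (1−s) ψ_p, and γ(s) := r(s) e^{iψ(s)} for s ∈ [0,1]. Then ∫₀¹ |γ'(s)| ds ≤ |r_p − r_q| + 2π max{r_p, r_q}. -/

import Mathlib

/-!
Writing `γ(s) = r(s) e^{iψ(s)}`, the product rule gives `γ' = (r' + i r ψ') e^{iψ}`, so
`|γ'| ≤ |r'| + |r| |ψ'|`. Along the linear interpolation `r' = r_q - r_p`, `0 ≤ r ≤ max r_p r_q`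
and `|ψ'| = |ψ_q - ψ_p| < 2π`, so `|γ'|` is pointwise bounded by the claimed constant, and so is
its integral over `[0, 1]`.
-/

open Complex Set

section PolarCurve

variable {r ψ : ℝ → ℝ} {r' ψ' s : ℝ}

theorem HasDerivAt.ofReal_mul_exp_ofReal_mul_I (hr : HasDerivAt r r' s)
    (hψ : HasDerivAt ψ ψ' s) :
    HasDerivAt (fun t => (r t : ℂ) * cexp ((ψ t : ℂ) * I))
      ((r' + r s * ψ' * I) * cexp ((ψ s : ℂ) * I)) s :=
  (hr.ofReal_comp.mul (hψ.ofReal_comp.mul_const I).cexp).congr_deriv (by ring)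

theorem norm_deriv_ofReal_mul_exp_ofReal_mul_I_le (hr : HasDerivAt r r' s)
    (hψ : HasDerivAt ψ ψ' s) :
    ‖deriv (fun t => (r t : ℂ) * cexp ((ψ t : ℂ) * I)) s‖ ≤ |r'| + |r s| * |ψ'| := by
  rw [(hr.ofReal_mul_exp_ofReal_mul_I hψ).deriv, norm_mul, norm_exp_ofReal_mul_I, mul_one]
  calc ‖(r' : ℂ) + r s * ψ' * I‖ ≤ ‖(r' : ℂ)‖ + ‖(r s : ℂ) * ψ' * I‖ := norm_add_le _ _
    _ = |r'| + |r s| * |ψ'| := by simp only [norm_mul, norm_real, Real.norm_eq_abs, norm_I, mul_one]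

end PolarCurve

theorem hasDerivAt_mul_add_one_sub_mul (a b s : ℝ) :
    HasDerivAt (fun t => t * b + (1 - t) * a) (b - a) s :=
  (((hasDerivAt_id s).mul_const b).add (((hasDerivAt_id s).const_sub 1).mul_const a)).congr_deriv
    (by ring)

theorem abs_mul_add_one_sub_mul_le_max {a b s : ℝ} (ha : 0 ≤ a) (hb : 0 ≤ b)
    (hs : s ∈ Icc (0 : ℝ) 1) :
    |s * b + (1 - s) * a| ≤ max a b := by
  obtain ⟨hs0, hs1⟩ := hs
  have hcombo := Convex.combo_le_max b a hs0 (sub_nonneg.2 hs1) (add_sub_cancel s 1)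
  rw [smul_eq_mul, smul_eq_mul, max_comm] at hcombo
  rw [abs_of_nonneg (by positivity)]
  exact hcombo

theorem integral_norm_le_of_norm_le_const {E : Type*} [NormedAddCommGroup E] {f : ℝ → E}
    {a b C : ℝ} (hab : a ≤ b) (h : ∀ x ∈ Ioc a b, ‖f x‖ ≤ C) :
    ∫ x in a..b, ‖f x‖ ≤ C * (b - a) := by
  have hbound := intervalIntegral.norm_integral_le_of_norm_le_const (f := fun x => ‖f x‖)
    fun x hx => (norm_norm (f x)).trans_le (h x (uIoc_of_le hab ▸ hx))
  rw [abs_of_nonneg (sub_nonneg.2 hab)] at hbound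
  exact (Real.le_norm_self _).trans hbound

theorem arc_length_estimate_general (rp rq ψp ψq : ℝ)
    (hrp : 0 ≤ rp) (hrq : 0 ≤ rq)
    (hψp : ψp ∈ Set.Ico 0 (2 * Real.pi)) (hψq : ψq ∈ Set.Ico 0 (2 * Real.pi)) :
    (∫ s in (0:ℝ)..1,
        ‖deriv (fun s : ℝ =>
          ((s * rq + (1 - s) * rp : ℝ) : ℂ) *
            Complex.exp (((s * ψq + (1 - s) * ψp : ℝ) : ℂ) * Complex.I)) s‖)
      ≤ |rp - rq| + 2 * Real.pi * max rp rq := by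
  have hangle : |ψq - ψp| ≤ 2 * Real.pi :=
    (abs_sub_lt_of_nonneg_of_lt hψq.1 hψq.2 hψp.1 hψp.2).le
  refine (integral_norm_le_of_norm_le_const (C := |rp - rq| + 2 * Real.pi * max rp rq)
    zero_le_one fun s hs => ?_).trans_eq (by rw [sub_zero, mul_one])
  have hradius := abs_mul_add_one_sub_mul_le_max hrp hrq (Ioc_subset_Icc_self hs)
  calc _ ≤ |rq - rp| + |s * rq + (1 - s) * rp| * |ψq - ψp| :=
        norm_deriv_ofReal_mul_exp_ofReal_mul_I_le (r := fun t => t * rq + (1 - t) * rp)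
          (ψ := fun t => t * ψq + (1 - t) * ψp) (hasDerivAt_mul_add_one_sub_mul rp rq s)
          (hasDerivAt_mul_add_one_sub_mul ψp ψq s)
    _ ≤ |rp - rq| + 2 * Real.pi * max rp rq := by
        rw [abs_sub_comm, mul_comm (2 * Real.pi)]
        gcongr

/-- Arc length estimate for the interpolating curve in polar coordinates:
if `p = rp e^{iψp}` and `q = rq e^{iψq}` with `rp, rq ≥ 0` and `ψp, ψq ∈ [0, 2π)`,
then the curve `γ(s) = (s rq + (1-s) rp) e^{i(s ψq + (1-s) ψp)}` has Euclidean
length at most `|rp - rq| + 2π max{rp, rq}`. -/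
theorem arc_length_estimate (p q : ℂ) (rp rq ψp ψq : ℝ)
    (hrp : 0 ≤ rp) (hrq : 0 ≤ rq)
    (hψp : ψp ∈ Set.Ico 0 (2 * Real.pi)) (hψq : ψq ∈ Set.Ico 0 (2 * Real.pi))
    (hp : p = (rp : ℂ) * Complex.exp ((ψp : ℂ) * Complex.I))
    (hq : q = (rq : ℂ) * Complex.exp ((ψq : ℂ) * Complex.I)) :
    (∫ s in (0:ℝ)..1,
        ‖deriv (fun s : ℝ =>
          ((s * rq + (1 - s) * rp : ℝ) : ℂ) *
            Complex.exp (((s * ψq + (1 - s) * ψp : ℝ) : ℂ) * Complex.I)) s‖)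
      ≤ |rp - rq| + 2 * Real.pi * max rp rq :=
  arc_length_estimate_general rp rq ψp ψq hrp hrq hψp hψq
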